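/- arXiv:2508.05204 — 5 statements merged into one kernel-verified Lean document; each statement's English description precedes it below -/
import Mathlib

section
/- Let θ_R, φ_R, θ_L, φ_L, a, b, c be real numbers satisfying the three equations (E1) cos θ_R cos φ_R cos θ_L sin φ_L − sin θ_R sin θ_L sin φ_L + cos θ_R sin φ_R cos φ_L = a, (E2) sin θ_R cos φ_R cos θ_L sin φ_L + cos θ_R sin θ_L sin φ_L + sin θ_R sin φ_R cos φ_L = b, (E3) −sin φ_R cos θ_L sin φ_L + cos φ_R cos φ_L = c. Then cos φ_L satisfies the quadratic equation (cos φ_L)² − 2·cos φ_R·c·cos φ_L + c² + (sin φ_R)²·(cos θ_R·b − sin θ_R·a)² − (sin φ_R)² = 0. -/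
open Real

/-- The quadratic equation satisfied by cos φ_L in the CLS scheme. -/
theorem cls_quadratic (θR φR θL φL a b c : ℝ)
    (hE1 : cos θR * cos φR * cos θL * sin φL - sin θR * sin θL * sin φL
        + cos θR * sin φR * cos φL = a)
    (hE2 : sin θR * cos φR * cos θL * sin φL + cos θR * sin θL * sin φL
        + sin θR * sin φR * cos φL = b)
    (hE3 : -sin φR * cos θL * sin φL + cos φR * cos φL = c) :
    (cos φL) ^ 2 - 2 * cos φR * c * cos φL + c ^ 2
      + (sin φR) ^ 2 * (cos θR * b - sin θR * a) ^ 2 - (sin φR) ^ 2 = 0 := by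
  subst hE1 hE2 hE3
  linear_combination (sin φR ^ 2 * sin θL ^ 2 * sin φL ^ 2 * (cos θR ^ 2 + sin θR ^ 2 + 1)) * sin_sq_add_cos_sq θR
    - cos φL ^ 2 * sin_sq_add_cos_sq φR
    + sin φR ^ 2 * sin φL ^ 2 * sin_sq_add_cos_sq θL
    + sin φR ^ 2 * sin_sq_add_cos_sq φL
end

section
/- Let θ_R, φ_R, θ_L, φ_L, a, b, c be real numbers satisfying the three equations (E1) cos θ_R cos φ_R cos θ_L sin φ_L − sin θ_R sin θ_L sin φ_L + cos θ_R sin φ_R cos φ_L = a, (E2) sin θ_R cos φ_R cos θ_L sin φ_L + cos θ_R sin θ_L sin φ_L + sin θ_R sin φ_R cos φ_L = b, (E3) −sin φ_R cos θ_L sin φ_L + cos φ_R cos φ_L = c, and assume sin φ_R ≥ 0. Set q = cos θ_R·b − sin θ_R·a. Then 1 − c² − q² ≥ 0, and cos φ_L = cos φ_R·c + sin φ_R·√(1 − c² − q²) or cos φ_L = cos φ_R·c − sin φ_R·√(1 − c² − q²). -/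
open Real

/-- Solutions of the quadratic equation for cos φ_L in the CLS scheme. -/
theorem cls_quadratic_solutions (θR φR θL φL a b c q : ℝ)
    (hE1 : cos θR * cos φR * cos θL * sin φL - sin θR * sin θL * sin φL
        + cos θR * sin φR * cos φL = a)
    (hE2 : sin θR * cos φR * cos θL * sin φL + cos θR * sin θL * sin φL
        + sin θR * sin φR * cos φL = b)
    (hE3 : -sin φR * cos θL * sin φL + cos φR * cos φL = c)
    (hφR : sin φR ≥ 0)
    (hq : q = cos θR * b - sin θR * a) :
    1 - c ^ 2 - q ^ 2 ≥ 0 ∧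
      (cos φL = cos φR * c + sin φR * Real.sqrt (1 - c ^ 2 - q ^ 2) ∨
        cos φL = cos φR * c - sin φR * Real.sqrt (1 - c ^ 2 - q ^ 2)) := by
  set p : ℝ := cos θR * a + sin θR * b with hp
  have hR := sin_sq_add_cos_sq θR
  have hL := sin_sq_add_cos_sq θL
  have hPL := sin_sq_add_cos_sq φL
  have hq' : q = sin θL * sin φL := by
    rw [hq, ← hE1, ← hE2]; linear_combination (sin θL * sin φL) * hR
  have hp' : p = cos φR * (cos θL * sin φL) + sin φR * cos φL := by
    rw [hp, ← hE1, ← hE2]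
    linear_combination (cos φR * cos θL * sin φL + sin φR * cos φL) * hR
  have key : 1 - c ^ 2 - q ^ 2 = p ^ 2 := by
    rw [hq', hp', ← hE3]
    linear_combination (-((cos θL * sin φL)^2 + cos φL^2)) * sin_sq_add_cos_sq φR - sin φL^2 * hL - hPL
  have hcos : cos φL = cos φR * c + sin φR * p := by
    rw [hp', ← hE3]
    linear_combination (-cos φL) * sin_sq_add_cos_sq φR
  refine ⟨by rw [key]; positivity, ?_⟩
  rw [key]
  rcases le_or_gt 0 p with h | h
  · left; rw [Real.sqrt_sq h]; exact hcos
  · right; rw [show p ^ 2 = (-p) ^ 2 by ring, Real.sqrt_sq (by linarith)]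
    rw [hcos]; ring
end

section
/- Let θ_R, φ_R, θ_L, φ_L, a, b, c be real numbers satisfying the three equations (E1) cos θ_R cos φ_R cos θ_L sin φ_L − sin θ_R sin θ_L sin φ_L + cos θ_R sin φ_R cos φ_L = a, (E2) sin θ_R cos φ_R cos θ_L sin φ_L + cos θ_R sin θ_L sin φ_L + sin θ_R sin φ_R cos φ_L = b, (E3) −sin φ_R cos θ_L sin φ_L + cos φ_R cos φ_L = c. If additionally c² + (cos θ_R·b − sin θ_R·a)² = 1, then cos φ_L = cos φ_R · c. (This is the CLS scheme polar angle formula φ_L = arccos(cos φ_R · (z_{i*} − z_len)/d_{i*}).) -/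
open Real

/-- The CLS scheme polar angle formula: cos φ_L = cos φ_R · c. -/
theorem cls_polar_angle (θR φR θL φL a b c : ℝ)
    (hE1 : cos θR * cos φR * cos θL * sin φL - sin θR * sin θL * sin φL
        + cos θR * sin φR * cos φL = a)
    (hE2 : sin θR * cos φR * cos θL * sin φL + cos θR * sin θL * sin φL
        + sin θR * sin φR * cos φL = b)
    (hE3 : -sin φR * cos θL * sin φL + cos φR * cos φL = c)
    (hsq : c ^ 2 + (cos θR * b - sin θR * a) ^ 2 = 1) :
    cos φL = cos φR * c := by
  subst hE1 hE2 hE3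
  have hR := sin_sq_add_cos_sq θR
  have hL := sin_sq_add_cos_sq θL
  have hpL := sin_sq_add_cos_sq φL
  have hpR := sin_sq_add_cos_sq φR
  have hdiff : cos θR * (sin θR * cos φR * cos θL * sin φL + cos θR * sin θL * sin φL
        + sin θR * sin φR * cos φL) - sin θR * (cos θR * cos φR * cos θL * sin φL
        - sin θR * sin θL * sin φL + cos θR * sin φR * cos φL) = sin θL * sin φL := by
    linear_combination (sin θL * sin φL) * hR
  rw [hdiff] at hsq
  have hkey : (cos φR * (cos θL * sin φL) + sin φR * cos φL) ^ 2 = 0 := by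
    linear_combination ((cos θL * sin φL)^2 + cos φL^2) * hpR - hsq + sin φL^2 * hL + hpL
  have h0 : cos φR * (cos θL * sin φL) + sin φR * cos φL = 0 := by
    exact pow_eq_zero_iff (n := 2) (by norm_num) |>.mp hkey
  linear_combination sin φR * h0 - cos φL * hpR
end

section
/- Let θ_R, φ_R, θ_L, φ_L, a, b, c be real numbers satisfying the three equations (E1) cos θ_R cos φ_R cos θ_L sin φ_L − sin θ_R sin θ_L sin φ_L + cos θ_R sin φ_R cos φ_L = a, (E2) sin θ_R cos φ_R cos θ_L sin φ_L + cos θ_R sin θ_L sin φ_L + sin θ_R sin φ_R cos φ_L = b, (E3) −sin φ_R cos θ_L sin φ_L + cos φ_R cos φ_L = c. If cos φ_L = cos φ_R·c and sin φ_L = √(1 − (cos φ_R·c)²) > 0, then sin θ_L = (cos θ_R·b − sin θ_R·a)/√(1 − (cos φ_R·c)²). (This is the CLS scheme azimuth angle formula.) -/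
open Real

/-- The CLS scheme azimuth angle formula. -/
theorem cls_azimuth_angle (θR φR θL φL a b c : ℝ)
    (hE1 : cos θR * cos φR * cos θL * sin φL - sin θR * sin θL * sin φL
        + cos θR * sin φR * cos φL = a)
    (hE2 : sin θR * cos φR * cos θL * sin φL + cos θR * sin θL * sin φL
        + sin θR * sin φR * cos φL = b)
    (hE3 : -sin φR * cos θL * sin φL + cos φR * cos φL = c)
    (hcos : cos φL = cos φR * c)
    (hsin : sin φL = Real.sqrt (1 - (cos φR * c) ^ 2))
    (hpos : sin φL > 0) :
    sin θL = (cos θR * b - sin θR * a) / Real.sqrt (1 - (cos φR * c) ^ 2) := by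
  have key : cos θR * b - sin θR * a = sin θL * sin φL := by
    have h := sin_sq_add_cos_sq θR
    linear_combination sin θL * sin φL * h - cos θR * hE2 + sin θR * hE1
  rw [← hsin, key, mul_div_assoc, div_self (ne_of_gt hpos), mul_one]
end

section
/- Let l and q be vectors in ℝ³ with ‖l‖ = 1, and let n_l > 0 be a real number such that (1/n_l²)·‖l × q‖² ≤ 1 (where × is the cross product). Then the refracted-ray direction vector η_ref = (1/n_l)·(l × (l × q)) − l·√(1 − (1/n_l²)·⟨l × q, l × q⟩) is a unit vector: ‖η_ref‖ = 1. -/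
/-!
The refracted direction is `(1/n_l) • b - s • l` with `b = l × (l × q)` and
`s = √(1 - ‖l × q‖² / n_l²)`. Since `b` is orthogonal to `l`, Pythagoras gives
`‖(1/n_l) • b - s • l‖² = ‖b‖² / n_l² + s²`, and for a unit vector `l` the
Binet–Cauchy identity gives `‖b‖ = ‖l × q‖` because `l ⊥ l × q`; the two terms add up to `1`.
-/

open RealInnerProductSpace

/-- Cross product of two vectors in three-dimensional Euclidean space. -/
noncomputable def cross3 (u v : EuclideanSpace ℝ (Fin 3)) :
    EuclideanSpace ℝ (Fin 3) :=
  (EuclideanSpace.equiv (Fin 3) ℝ).symm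
    ![u 1 * v 2 - u 2 * v 1, u 2 * v 0 - u 0 * v 2, u 0 * v 1 - u 1 * v 0]

section CrossProduct

open Matrix WithLp

lemma cross3_eq_toLp_crossProduct (u v : EuclideanSpace ℝ (Fin 3)) :
    cross3 u v = toLp 2 (ofLp u ⨯₃ ofLp v) := by
  rw [cross3, cross_apply]
  rfl

lemma real_inner_eq_dotProduct_ofLp {ι : Type*} [Fintype ι] (x y : EuclideanSpace ℝ ι) :
    ⟪x, y⟫ = ofLp x ⬝ᵥ ofLp y := by
  rw [EuclideanSpace.inner_eq_star_dotProduct, star_trivial, dotProduct_comm]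

lemma inner_self_cross3 (u v : EuclideanSpace ℝ (Fin 3)) : ⟪u, cross3 u v⟫ = 0 := by
  rw [real_inner_eq_dotProduct_ofLp, cross3_eq_toLp_crossProduct, ofLp_toLp, dot_self_cross]

lemma inner_cross3_cross3 (u v w x : EuclideanSpace ℝ (Fin 3)) :
    ⟪cross3 u v, cross3 w x⟫ = ⟪u, w⟫ * ⟪v, x⟫ - ⟪u, x⟫ * ⟪v, w⟫ := by
  simp only [real_inner_eq_dotProduct_ofLp, cross3_eq_toLp_crossProduct, cross_dot_cross]

end CrossProduct

lemma norm_cross3_of_norm_eq_one_of_inner_eq_zero {u v : EuclideanSpace ℝ (Fin 3)}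
    (hu : ‖u‖ = 1) (huv : ⟪u, v⟫ = 0) : ‖cross3 u v‖ = ‖v‖ := by
  have hsq : ‖cross3 u v‖ ^ 2 = ‖v‖ ^ 2 := by
    rw [← real_inner_self_eq_norm_sq, ← real_inner_self_eq_norm_sq, inner_cross3_cross3,
      real_inner_self_eq_norm_sq, hu, huv]
    ring
  exact (pow_left_inj₀ (norm_nonneg _) (norm_nonneg _) two_ne_zero).1 hsq

lemma norm_smul_sub_smul_sq_of_inner_eq_zero {E : Type*} [NormedAddCommGroup E]
    [InnerProductSpace ℝ E] {x y : E} (h : ⟪x, y⟫ = 0) (a b : ℝ) :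
    ‖a • x - b • y‖ ^ 2 = a ^ 2 * ‖x‖ ^ 2 + b ^ 2 * ‖y‖ ^ 2 := by
  rw [norm_sub_sq_real, real_inner_smul_left, real_inner_smul_right, h, norm_smul, norm_smul,
    Real.norm_eq_abs, Real.norm_eq_abs, mul_pow, mul_pow, sq_abs, sq_abs]
  ring

theorem refracted_ray_unit_general (l q : EuclideanSpace ℝ (Fin 3)) (n_l : ℝ)
    (hl : ‖l‖ = 1)
    (hcross : (1 / n_l ^ 2) * ‖cross3 l q‖ ^ 2 ≤ 1) :
    ‖(1 / n_l) • cross3 l (cross3 l q)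
        - Real.sqrt (1 - (1 / n_l ^ 2) * ⟪cross3 l q, cross3 l q⟫) • l‖ = 1 := by
  have horth : ⟪cross3 l (cross3 l q), l⟫ = 0 := by
    rw [real_inner_comm, inner_self_cross3]
  have hnorm : ‖cross3 l (cross3 l q)‖ = ‖cross3 l q‖ :=
    norm_cross3_of_norm_eq_one_of_inner_eq_zero hl (inner_self_cross3 l q)
  refine (pow_eq_one_iff_of_nonneg (norm_nonneg _) two_ne_zero).1 ?_
  rw [norm_smul_sub_smul_sq_of_inner_eq_zero horth, hnorm, hl, real_inner_self_eq_norm_sq,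
    Real.sq_sqrt (by linarith), one_div_pow]
  ring

/-- The refracted-ray direction vector given by the vector form of Snell's law
is a unit vector. -/
theorem refracted_ray_unit (l q : EuclideanSpace ℝ (Fin 3)) (n_l : ℝ)
    (hl : ‖l‖ = 1) (hn : n_l > 0)
    (hcross : (1 / n_l ^ 2) * ‖cross3 l q‖ ^ 2 ≤ 1) :
    ‖(1 / n_l) • cross3 l (cross3 l q)
        - Real.sqrt (1 - (1 / n_l ^ 2) * ⟪cross3 l q, cross3 l q⟫) • l‖ = 1 :=
  refracted_ray_unit_general l q n_l hl hcross
end
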